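/- If a finite sequence of states from a finite alphabet has empirical conditional transition frequencies within a relative factor δ of the true Markov transition probabilities (i.e., |q̂(φ_i|φ_j) − q(φ_i|φ_j)| ≤ δ·q(φ_i|φ_j) for all states), then the negative normalized log-probability of the sequence differs from the entropy rate H by at most η̂ = δ·H; that is, H − δH ≤ −(1/n)·log q(π_n) ≤ H + δH. -/

import Mathlib

open Finset

/-! Since `log q(π_n) = ∑ ψ, ℓ ψ * log (q ψ)`, the quantity `-(1/n) log q(π_n)` is the entropy sum
`∑ ψ, q ψ * (-log (q ψ))` with the empirical weights `ℓ ψ / n` in place of `q ψ`. The terms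
`-log (q ψ)` are nonnegative, so a relative error `δ` in every weight gives a relative error at
most `δ` in the sum. -/

lemma abs_sum_mul_sub_sum_mul_le {ι : Type*} (s : Finset ι) {p q w : ι → ℝ} {δ : ℝ}
    (hw : ∀ i ∈ s, 0 ≤ w i) (hpq : ∀ i ∈ s, |p i - q i| ≤ δ * q i) :
    |∑ i ∈ s, p i * w i - ∑ i ∈ s, q i * w i| ≤ δ * ∑ i ∈ s, q i * w i := by
  rw [← sum_sub_distrib, mul_sum]
  refine (abs_sum_le_sum_abs _ _).trans (sum_le_sum fun i hi => ?_)
  calc |p i * w i - q i * w i| = |p i - q i| * w i := by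
        rw [← sub_mul, abs_mul, abs_of_nonneg (hw i hi)]
    _ ≤ δ * q i * w i := mul_le_mul_of_nonneg_right (hpq i hi) (hw i hi)
    _ = δ * (q i * w i) := mul_assoc _ _ _

lemma Real.log_prod_pow {ι : Type*} (s : Finset ι) {q : ι → ℝ} (ℓ : ι → ℕ)
    (hq : ∀ i ∈ s, q i ≠ 0) :
    Real.log (∏ i ∈ s, q i ^ ℓ i) = ∑ i ∈ s, ℓ i * Real.log (q i) := by
  rw [Real.log_prod fun i hi => pow_ne_zero _ (hq i hi)]
  simp only [Real.log_pow]

theorem markov_strong_typicality_implies_weak_general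
    {S : Type*} [Fintype S] (n : ℕ) (δ : ℝ)
    (q : S → ℝ) (hqpos : ∀ ψ, 0 < q ψ) (hqle : ∀ ψ, q ψ ≤ 1)
    (ℓ : S → ℕ)
    (htyp : ∀ ψ, |(ℓ ψ : ℝ) / n - q ψ| ≤ δ * q ψ)
    (H : ℝ) (hH : H = ∑ ψ, (-(q ψ * Real.log (q ψ)))) :
    H - δ * H ≤ -(1 / (n : ℝ)) * Real.log (∏ ψ, q ψ ^ ℓ ψ) ∧
      -(1 / (n : ℝ)) * Real.log (∏ ψ, q ψ ^ ℓ ψ) ≤ H + δ * H := by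
  have hH' : H = ∑ ψ, q ψ * -Real.log (q ψ) := by simp only [hH, mul_neg]
  have hlog : -(1 / (n : ℝ)) * Real.log (∏ ψ, q ψ ^ ℓ ψ)
      = ∑ ψ, (ℓ ψ : ℝ) / n * -Real.log (q ψ) := by
    rw [Real.log_prod_pow _ _ fun ψ _ => (hqpos ψ).ne', mul_sum]
    exact sum_congr rfl fun ψ _ => by ring
  have hclose := abs_le.mp <| abs_sum_mul_sub_sum_mul_le univ
    (fun ψ _ => neg_nonneg.mpr (Real.log_nonpos (hqpos ψ).le (hqle ψ))) fun ψ _ => htyp ψ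
  rw [hlog, hH']
  constructor <;> linarith [hclose.1, hclose.2]

/-- **Typicality for Markov sequences (Theorem 1).**
`S` is the finite set of transition-conditional pairs `ψ` appearing in the chain,
`q ψ` the true (positive) transition probability of pair `ψ`, `ℓ ψ` the number of
occurrences of `ψ` in the sequence `π_n` of length `n`, so that the probability of
the sequence is `q(π_n) = ∏ ψ, q ψ ^ ℓ ψ` and the empirical conditional distribution
is `ℓ ψ / n`.  If `|ℓ ψ / n - q ψ| ≤ δ * q ψ` for all `ψ`, then
`H - δH ≤ -(1/n) log q(π_n) ≤ H + δH` where `H = -∑ ψ, q ψ * log (q ψ)`. -/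
theorem markov_strong_typicality_implies_weak
    {S : Type*} [Fintype S] (n : ℕ) (hn : 0 < n) (δ : ℝ) (hδ : 0 ≤ δ)
    (q : S → ℝ) (hqpos : ∀ ψ, 0 < q ψ) (hqle : ∀ ψ, q ψ ≤ 1)
    (hqsum : ∑ ψ, q ψ = 1)
    (ℓ : S → ℕ) (hℓsum : ∑ ψ, ℓ ψ = n)
    (htyp : ∀ ψ, |(ℓ ψ : ℝ) / n - q ψ| ≤ δ * q ψ)
    (H : ℝ) (hH : H = ∑ ψ, (-(q ψ * Real.log (q ψ)))) :
    H - δ * H ≤ -(1 / (n : ℝ)) * Real.log (∏ ψ, q ψ ^ ℓ ψ) ∧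
      -(1 / (n : ℝ)) * Real.log (∏ ψ, q ψ ^ ℓ ψ) ≤ H + δ * H :=
  markov_strong_typicality_implies_weak_general n δ q hqpos hqle ℓ htyp H hH
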